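/- arXiv:1612.01365 — 11 statements merged into one kernel-verified Lean document; each statement's English description precedes it below -/
import Mathlib

section
/- An additive function f : ℝ → ℝ satisfies δ_α δ_β f(x) = 0 for all α, β, x ∈ ℝ if and only if f(x) = d(x) + f(1)·x for some derivation d : ℝ → ℝ (i.e., d additive with d(xy) = x·d(y) + y·d(x)). -/
noncomputable def δ (α : ℝ) (f : ℝ → ℝ) : ℝ → ℝ := fun x => f (α * x) - α * f x

theorem stmt_2 (f : ℝ → ℝ)
    (hadd : ∀ x y : ℝ, f (x + y) = f x + f y) :
    (∀ α β x : ℝ, δ α (δ β f) x = 0) ↔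
      ∃ d : ℝ → ℝ, (∀ x y : ℝ, d (x + y) = d x + d y) ∧
        (∀ x y : ℝ, d (x * y) = x * d y + y * d x) ∧
        ∀ x : ℝ, f x = d x + f 1 * x := by
  constructor
  · intro h
    refine ⟨fun x => f x - f 1 * x, ?_, ?_, ?_⟩
    · intro x y; simp only; rw [hadd]; ring
    · intro x y
      have key := h y x 1
      simp only [δ, mul_one] at key
      simp only
      linear_combination key
    · intro x; simp only; ring
  · rintro ⟨d, hda, hdl, hf⟩ α β x
    simp only [δ]
    rw [hf (β * (α * x)), hf (α * x), hf (β * x), hf x,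
      hdl β (α * x), hdl α x, hdl β x]
    ring
end

section
/- An additive function f : ℝ → ℝ with f(1) = 0 is a first-order derivation (i.e., δ_α δ_β f(x) = 0 for all α, β, x) if and only if f is a derivation: f(xy) = x·f(y) + y·f(x) for all x, y ∈ ℝ. -/
theorem stmt_3 (f : ℝ → ℝ)
    (hadd : ∀ x y : ℝ, f (x + y) = f x + f y) (h1 : f 1 = 0) :
    (∀ α β x : ℝ, δ α (δ β f) x = 0) ↔
      (∀ x y : ℝ, f (x * y) = x * f y + y * f x) := by
  constructor
  · intro h x y
    have := h y x 1
    simp only [δ, mul_one, h1, mul_zero, sub_zero] at this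
    rw [mul_comm x y] at this ⊢
    linarith
  · intro h α β x
    simp only [δ]
    rw [h β (α * x), h β x]
    ring
end

section
/- If d : ℝ → ℝ is a derivation, then the composition d ∘ d is a derivation of order 2, i.e., (d∘d)(1) = 0 and δ_{α₁}δ_{α₂}δ_{α₃}(d∘d)(x) = 0 for all α₁, α₂, α₃, x ∈ ℝ. -/
theorem stmt_4 (d : ℝ → ℝ)
    (hadd : ∀ x y : ℝ, d (x + y) = d x + d y)
    (hder : ∀ x y : ℝ, d (x * y) = x * d y + y * d x) :
    (d ∘ d) 1 = 0 ∧ ∀ α₁ α₂ α₃ x : ℝ, δ α₁ (δ α₂ (δ α₃ (d ∘ d))) x = 0 := by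
  have h0 : d 0 = 0 := by have := hadd 0 0; simp at this; linarith [this]
  have h1 : d 1 = 0 := by have := hder 1 1; simp at this; linarith
  have dd_mul : ∀ a b : ℝ, d (d (a * b)) = a * d (d b) + 2 * d a * d b + b * d (d a) := by
    intro a b
    rw [hder a b, hadd, hder a (d b), hder b (d a)]
    ring
  constructor
  · simp [Function.comp, h1, h0]
  · intro α₁ α₂ α₃ x
    simp only [δ, Function.comp_apply, dd_mul]; simp only [hder]
    ring
end

section
/- If d : ℝ → ℝ is a nontrivial derivation, then d ∘ d is a second-order derivation that is not a first-order derivation (i.e., d∘d does not satisfy (d∘d)(xy) = x·(d∘d)(y) + y·(d∘d)(x) for all x, y). -/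
theorem stmt_5 (d : ℝ → ℝ)
    (hadd : ∀ x y : ℝ, d (x + y) = d x + d y)
    (hder : ∀ x y : ℝ, d (x * y) = x * d y + y * d x)
    (hnt : d ≠ 0) :
    ((∀ x y : ℝ, (d ∘ d) (x + y) = (d ∘ d) x + (d ∘ d) y) ∧
      (d ∘ d) 1 = 0 ∧
      (∀ α₁ α₂ α₃ x : ℝ, δ α₁ (δ α₂ (δ α₃ (d ∘ d))) x = 0)) ∧
    ¬ (∀ x y : ℝ, (d ∘ d) (x * y) = x * (d ∘ d) y + y * (d ∘ d) x) := by
  have hf : ∀ x y : ℝ, (d ∘ d) (x * y) = x * (d ∘ d) y + y * (d ∘ d) x + 2 * d x * d y := by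
    intro x y
    simp only [Function.comp_apply]
    rw [hder, hadd, hder, hder]; ring
  constructor
  · refine ⟨fun x y => by simp [Function.comp_apply, hadd], ?_, ?_⟩
    · have h1 : d 1 = 0 := by
        have := hder 1 1; simp at this; linarith
      have h0 : d 0 = 0 := by
        have := hadd 0 0; simp at this; linarith
      simp [Function.comp_apply, h1, h0]
    · intro α₁ α₂ α₃ x
      simp only [δ, hf]
      simp only [hder]
      ring
  · intro h
    have h2 : ∀ x y : ℝ, 2 * d x * d y = 0 := by
      intro x y
      have := hf x y; rw [h] at this; linarith
    apply hnt
    funext x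
    have hx := h2 x x
    have : d x = 0 := by nlinarith
    simpa using this
end

section
/- Let F : G^n → H be a symmetric n-additive function between abelian groups with trace f(x) = F(x,…,x). Then for all x, y₁,…,y_n ∈ G, the iterated difference Δ_{y₁}⋯Δ_{y_n} f(x) = n!·F(y₁,…,y_n), and for k > n, Δ_{y₁}⋯Δ_{y_k} f(x) = 0. -/
def Δ {G H : Type*} [AddCommGroup G] [AddCommGroup H] (h : G) (f : G → H) : G → H :=
  fun x => f (x + h) - f x

section Aux

variable {G H : Type*} [AddCommGroup G] [AddCommGroup H] {n : ℕ}

/-- pattern function: slots in `A` get `x + c i`, others get `c i`. -/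
def hfun (A : Finset (Fin n)) (c : Fin n → G) (x : G) : Fin n → G :=
  fun i => if i ∈ A then x + c i else c i

lemma foldr_sum {ι : Type*} (s : Finset ι) (g : ι → G → H) (l : List G) :
    l.foldr Δ (fun x => ∑ i ∈ s, g i x) = fun x => ∑ i ∈ s, l.foldr Δ (g i) x := by
  induction l with
  | nil => rfl
  | cons a l ih =>
    simp only [List.foldr_cons, ih]
    funext x
    simp [Δ, Finset.sum_sub_distrib]

variable (F : (Fin n → G) → H)

lemma expandF
    (hadd : ∀ (i : Fin n) (v : Fin n → G) (y : G),
      F (Function.update v i (v i + y)) = F v + F (Function.update v i y))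
    (A : Finset (Fin n)) (v : Fin n → G) (y : G) :
    F (fun i => if i ∈ A then v i + y else v i)
      = ∑ S ∈ A.powerset, F (fun i => if i ∈ S then y else v i) := by
  induction A using Finset.induction_on generalizing v with
  | empty => simp
  | @insert a A ha ih =>
    have h1 : (fun i => if i ∈ insert a A then v i + y else v i)
        = Function.update (fun i => if i ∈ A then v i + y else v i) a
            ((fun i => if i ∈ A then v i + y else v i) a + y) := by
      funext i
      rcases eq_or_ne i a with rfl | hne
      · simp [Function.update_self, ha]
      · simp [Function.update_of_ne hne, Finset.mem_insert, hne]
    rw [h1, hadd]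
    have h2 : Function.update (fun i => if i ∈ A then v i + y else v i) a y
        = (fun i => if i ∈ A then (Function.update v a y) i + y
            else (Function.update v a y) i) := by
      funext i
      rcases eq_or_ne i a with rfl | hne
      · simp [Function.update_self, ha]
      · simp [Function.update_of_ne hne]
    rw [h2, ih, ih]
    rw [Finset.powerset_insert, Finset.sum_union, Finset.sum_image]
    · congr 1
      apply Finset.sum_congr rfl
      intro S hS
      have haS : a ∉ S := fun h => ha (Finset.mem_powerset.mp hS h)
      congr 1
      funext i
      rcases eq_or_ne i a with rfl | hne
      · simp [haS, Function.update_self]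
      · simp [Function.update_of_ne hne, Finset.mem_insert, hne]
    · intro S hS T hT hST
      have haS : a ∉ S := fun h => ha (Finset.mem_powerset.mp hS h)
      have haT : a ∉ T := fun h => ha (Finset.mem_powerset.mp hT h)
      rw [← Finset.erase_insert haS, ← Finset.erase_insert haT, hST]
    · rw [Finset.disjoint_right]
      rintro S hS hS'
      simp only [Finset.mem_image] at hS
      obtain ⟨T, _, rfl⟩ := hS
      exact ha (Finset.mem_powerset.mp hS' (Finset.mem_insert_self a T))

lemma Dexp
    (hadd : ∀ (i : Fin n) (v : Fin n → G) (y : G),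
      F (Function.update v i (v i + y)) = F v + F (Function.update v i y))
    (A : Finset (Fin n)) (c : Fin n → G) (y : G) :
    Δ y (fun x => F (hfun A c x))
      = fun x => ∑ S ∈ A.powerset.erase ∅,
          F (hfun (A \ S) (fun i => if i ∈ S then y else c i) x) := by
  funext x
  show F (hfun A c (x + y)) - F (hfun A c x) = _
  have h1 : hfun A c (x + y)
      = fun i => if i ∈ A then (hfun A c x) i + y else (hfun A c x) i := by
    funext i
    by_cases hi : i ∈ A <;> simp [hfun, hi, add_right_comm]
  rw [h1, expandF F hadd]
  have h2 : ∀ S : Finset (Fin n),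
      (fun i => if i ∈ S then y else hfun A c x i)
        = hfun (A \ S) (fun i => if i ∈ S then y else c i) x := by
    intro S
    funext i
    by_cases hiS : i ∈ S
    · simp [hfun, hiS, Finset.mem_sdiff]
    · by_cases hiA : i ∈ A <;> simp [hfun, hiS, hiA, Finset.mem_sdiff]
  have h3 := Finset.sum_erase_add A.powerset
      (fun S => F (hfun (A \ S) (fun i => if i ∈ S then y else c i) x))
      (Finset.empty_mem_powerset A)
  calc (∑ S ∈ A.powerset, F (fun i => if i ∈ S then y else hfun A c x i)) - F (hfun A c x)
      = (∑ S ∈ A.powerset, F (hfun (A \ S) (fun i => if i ∈ S then y else c i) x))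
          - F (hfun A c x) := by
        congr 1; exact Finset.sum_congr rfl fun S _ => by rw [h2]
    _ = _ := by
        rw [← h3]
        have : F (hfun (A \ ∅) (fun i => if i ∈ (∅ : Finset (Fin n)) then y else c i) x)
            = F (hfun A c x) := by simp
        beta_reduce
        rw [this, add_sub_cancel_right]

lemma claimZ
    (hadd : ∀ (i : Fin n) (v : Fin n → G) (y : G),
      F (Function.update v i (v i + y)) = F v + F (Function.update v i y)) :
    ∀ (ys : List G) (A : Finset (Fin n)) (c : Fin n → G),
      A.card < ys.length → ∀ x, ys.foldr Δ (fun x => F (hfun A c x)) x = 0 := by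
  intro ys
  induction ys using List.reverseRecOn with
  | nil => intro A c h; simp at h
  | append_singleton rest y ih =>
    intro A c h x
    rw [List.foldr_append]
    simp only [List.foldr_cons, List.foldr_nil]
    rw [Dexp F hadd, foldr_sum]
    apply Finset.sum_eq_zero
    intro S hS
    rw [Finset.mem_erase, Finset.mem_powerset] at hS
    obtain ⟨hS0, hSA⟩ := hS
    apply ih
    have h1 : S.card ≠ 0 := by simpa [Finset.card_eq_zero] using hS0
    have h2 : (A \ S).card = A.card - S.card := Finset.card_sdiff_of_subset hSA
    have h3 : S.card ≤ A.card := Finset.card_le_card hSA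
    simp only [List.length_append, List.length_cons, List.length_nil] at h
    omega


lemma card_filter_le_val (n m : ℕ) :
    (Finset.univ.filter (fun i : Fin n => m ≤ (i : ℕ))).card = n - m := by
  rw [Finset.card_filter]
  rw [Fin.sum_univ_eq_sum_range (fun j => if m ≤ j then 1 else 0)]
  induction n with
  | zero => simp
  | succ n ih =>
    rw [Finset.sum_range_succ, ih]
    by_cases h : m ≤ n
    · simp only [h, if_true]; omega
    · simp only [h, if_false]; omega


lemma swap_step (m : ℕ) (hmn : m < n) (w : Fin n → G) (y : G) (i : Fin n)
    (hi : m ≤ (i : ℕ)) (x : G) :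
    hfun ((Finset.univ.filter (fun j : Fin n => m ≤ (j : ℕ))) \ {i})
        (fun j => if j ∈ ({i} : Finset (Fin n)) then y else if (j : ℕ) < m then w j else 0) x
      = (hfun (Finset.univ.filter (fun j : Fin n => m + 1 ≤ (j : ℕ)))
          (fun j => if (j : ℕ) < m + 1 then Function.update w ⟨m, hmn⟩ y j else 0) x)
        ∘ (Equiv.swap ⟨m, hmn⟩ i) := by
  have ha : ((⟨m, hmn⟩ : Fin n) : ℕ) = m := rfl
  funext j
  simp only [Function.comp_apply, hfun, Finset.mem_sdiff, Finset.mem_filter,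
    Finset.mem_univ, true_and, Finset.mem_singleton]
  by_cases hja : j = (⟨m, hmn⟩ : Fin n)
  · rw [hja, Equiv.swap_apply_left]
    by_cases hij : i = (⟨m, hmn⟩ : Fin n)
    · rw [hij]
      simp [ha]
    · have hiv : m + 1 ≤ (i : ℕ) := by
        have : (i : ℕ) ≠ m := fun h => hij (Fin.ext (by rw [h, ha]))
        omega
      have h1 : (m ≤ ((⟨m, hmn⟩ : Fin n) : ℕ) ∧ ¬(⟨m, hmn⟩ : Fin n) = i) :=
        ⟨le_refl m, fun h => hij h.symm⟩
      rw [if_pos h1, if_pos hiv]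
      have h2 : ¬(⟨m, hmn⟩ : Fin n) = i := fun h => hij h.symm
      rw [if_neg h2, if_neg (by omega : ¬ m < m), if_neg (by omega : ¬ (i : ℕ) < m + 1)]
  · by_cases hji : j = i
    · rw [hji, Equiv.swap_apply_right]
      have h1 : ¬(m ≤ (i : ℕ) ∧ ¬i = i) := by simp
      rw [if_pos (rfl : i = i)] at *
      rw [if_neg h1, if_neg (by rw [ha]; omega : ¬ m + 1 ≤ ((⟨m, hmn⟩ : Fin n) : ℕ))]
      rw [if_pos (by rw [ha]; omega : ((⟨m, hmn⟩ : Fin n) : ℕ) < m + 1), Function.update_self]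
    · rw [Equiv.swap_apply_of_ne_of_ne hja hji]
      have hja' : (j : ℕ) ≠ m := fun h => hja (Fin.ext (by rw [h, ha]))
      rw [if_neg hji]
      by_cases hjm : (j : ℕ) < m
      · rw [if_neg (fun h => absurd h.1 (by omega)), if_pos hjm,
          if_neg (by omega : ¬ m + 1 ≤ (j : ℕ)), if_pos (by omega : (j : ℕ) < m + 1),
          Function.update_of_ne hja]
      · rw [if_pos ⟨by omega, hji⟩, if_pos (by omega : m + 1 ≤ (j : ℕ)),
          if_neg hjm, if_neg (by omega : ¬ (j : ℕ) < m + 1)]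

lemma claimE
    (hadd : ∀ (i : Fin n) (v : Fin n → G) (y : G),
      F (Function.update v i (v i + y)) = F v + F (Function.update v i y))
    (hsym : ∀ (σ : Equiv.Perm (Fin n)) (v : Fin n → G), F (v ∘ σ) = F v) :
    ∀ (ys : List G) (m : ℕ) (w : Fin n → G), m + ys.length = n → ∀ x,
      ys.foldr Δ (fun x => F (hfun (Finset.univ.filter (fun i : Fin n => m ≤ (i : ℕ)))
          (fun i => if (i : ℕ) < m then w i else 0) x)) x
        = (ys.length).factorial • F (fun i => if (i : ℕ) < m then w i
            else ys.reverse.getD ((i : ℕ) - m) 0) := by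
  intro ys
  induction ys using List.reverseRecOn with
  | nil =>
    intro m w hm x
    simp only [List.length_nil] at hm
    have hm' : m = n := by omega
    subst hm'
    rw [List.length_nil, Nat.factorial_zero, one_smul]
    simp only [List.foldr_nil]
    congr 1
    funext i
    have hi := i.isLt
    simp only [hfun, Finset.mem_filter, Finset.mem_univ, true_and]
    rw [if_neg (by omega : ¬ m ≤ (i : ℕ)), if_pos hi, if_pos hi]
  | append_singleton rest y ih =>
    intro m w hm x
    have hk : rest.length + 1 = (rest ++ [y]).length := by simp
    have hmn : m < n := by omega
    rw [List.foldr_append]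
    simp only [List.foldr_cons, List.foldr_nil]
    rw [Dexp F hadd, foldr_sum]
    beta_reduce
    set A := Finset.univ.filter (fun i : Fin n => m ≤ (i : ℕ)) with hA
    have hAcard : A.card = rest.length + 1 := by
      rw [hA, card_filter_le_val]; omega
    set g' : H := rest.foldr Δ (fun x => F (hfun
        (Finset.univ.filter (fun i : Fin n => m + 1 ≤ (i : ℕ)))
        (fun i => if (i : ℕ) < m + 1 then Function.update w ⟨m, hmn⟩ y i else 0) x)) x with hg'
    have key : ∀ S ∈ A.powerset.erase ∅,
        rest.foldr Δ (fun x => F (hfun (A \ S) (fun i => if i ∈ S then y else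
          if (i : ℕ) < m then w i else 0) x)) x
        = if S.card = 1 then g' else 0 := by
      intro S hS
      rw [Finset.mem_erase, Finset.mem_powerset] at hS
      obtain ⟨hS0, hSA⟩ := hS
      by_cases hc : S.card = 1
      · rw [if_pos hc]
        obtain ⟨i, rfl⟩ := Finset.card_eq_one.mp hc
        have hiA : i ∈ A := hSA (Finset.mem_singleton_self i)
        have him : m ≤ (i : ℕ) := by
          rw [hA, Finset.mem_filter] at hiA; exact hiA.2
        rw [hg']
        refine congrArg (fun g : G → H => List.foldr Δ g rest x) (funext fun z => ?_)
        rw [hA]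
        rw [swap_step m hmn w y i him z]
        exact hsym (Equiv.swap ⟨m, hmn⟩ i) _
      · rw [if_neg hc]
        apply claimZ F hadd
        have h1 : S.card ≠ 0 := by simpa [Finset.card_eq_zero] using hS0
        have h2 : (A \ S).card = A.card - S.card := Finset.card_sdiff_of_subset hSA
        have h3 : S.card ≤ A.card := Finset.card_le_card hSA
        omega
    rw [Finset.sum_congr rfl key, ← Finset.sum_filter, Finset.sum_const]
    have hfilt : (A.powerset.erase ∅).filter (fun S => S.card = 1)
        = Finset.powersetCard 1 A := by
      ext S
      simp only [Finset.mem_filter, Finset.mem_erase, Finset.mem_powerset,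
        Finset.mem_powersetCard]
      constructor
      · rintro ⟨⟨_, hsub⟩, hc⟩; exact ⟨hsub, hc⟩
      · rintro ⟨hsub, hc⟩
        refine ⟨⟨?_, hsub⟩, hc⟩
        rintro rfl; simp at hc
    rw [hfilt, Finset.card_powersetCard, Nat.choose_one_right, hAcard]
    have hIH := ih (m + 1) (Function.update w ⟨m, hmn⟩ y) (by simp at hm ⊢; omega) x
    rw [hg', hIH, smul_smul]
    have hΨΦ : F (fun i => if (i : ℕ) < m + 1 then Function.update w ⟨m, hmn⟩ y i
          else rest.reverse.getD ((i : ℕ) - (m + 1)) 0)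
        = F (fun i => if (i : ℕ) < m then w i
          else (rest ++ [y]).reverse.getD ((i : ℕ) - m) 0) := by
      congr 1
      funext i
      rw [List.reverse_append, List.reverse_singleton, List.singleton_append]
      rcases lt_trichotomy ((i : ℕ)) m with h | h | h
      · rw [if_pos (by omega : (i : ℕ) < m + 1), if_pos h,
          Function.update_of_ne (fun hh => by rw [hh] at h; exact absurd h (by simp))]
      · rw [if_pos (by omega : (i : ℕ) < m + 1), if_neg (by omega : ¬ (i : ℕ) < m)]
        have : i = (⟨m, hmn⟩ : Fin n) := Fin.ext (by simpa using h)
        rw [this, Function.update_self]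
        have : (((⟨m, hmn⟩ : Fin n) : ℕ)) - m = 0 := by simp
        rw [this, List.getD_cons_zero]
      · rw [if_neg (by omega : ¬ (i : ℕ) < m + 1), if_neg (by omega : ¬ (i : ℕ) < m)]
        have h1 : (i : ℕ) - m = ((i : ℕ) - (m + 1)) + 1 := by omega
        rw [h1, List.getD_cons_succ]
    rw [hΨΦ]
    congr 1
    rw [List.length_append, List.length_singleton, Nat.factorial_succ]

end Aux

theorem stmt_6 {G H : Type*} [AddCommGroup G] [AddCommGroup H] (n : ℕ)
    (F : (Fin n → G) → H)
    (haddF : ∀ (i : Fin n) (v : Fin n → G) (y : G),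
      F (Function.update v i (v i + y)) = F v + F (Function.update v i y))
    (hsym : ∀ (σ : Equiv.Perm (Fin n)) (v : Fin n → G), F (v ∘ σ) = F v)
    (f : G → H) (hf : ∀ x : G, f x = F (fun _ => x)) :
    (∀ (y : Fin n → G) (x : G),
      ((List.ofFn y).foldr Δ f) x = n.factorial • F y) ∧
    (∀ k : ℕ, n < k → ∀ (y : Fin k → G) (x : G),
      ((List.ofFn y).foldr Δ f) x = 0) := by
  have hf' : f = fun x => F (hfun (Finset.univ.filter (fun i : Fin n => 0 ≤ (i : ℕ)))
      (fun i => if (i : ℕ) < 0 then (0 : G) else 0) x) := by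
    funext z
    rw [hf z]
    congr 1
    funext i
    simp [hfun]
  constructor
  · intro y x
    rw [hf']
    rw [claimE F haddF hsym (List.ofFn y) 0 (fun _ => 0) (by simp) x]
    rw [List.length_ofFn]
    congr 1
    have hΦ : (fun i : Fin n => if (i : ℕ) < 0 then (0 : G)
        else (List.ofFn y).reverse.getD ((i : ℕ) - 0) 0) = y ∘ (Fin.revPerm : Equiv.Perm (Fin n)) := by
      funext i
      rw [if_neg (by omega : ¬ (i : ℕ) < 0), Nat.sub_zero]
      have hlen : (i : ℕ) < (List.ofFn y).reverse.length := by simp [i.isLt]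
      rw [List.getD_eq_getElem _ _ hlen]
      rw [List.getElem_reverse]
      rw [List.getElem_ofFn]
      simp only [Function.comp_apply, Fin.revPerm_apply]
      congr 1
      ext
      simp [Fin.rev]
      omega
    rw [hΦ]
    exact hsym Fin.revPerm y
  · intro k hk y x
    rw [hf']
    apply claimZ F haddF
    have : (Finset.univ.filter (fun i : Fin n => 0 ≤ (i : ℕ))).card = n := by
      rw [card_filter_le_val]; omega
    rw [this, List.length_ofFn]
    exact hk
end

section
/- A symmetric n-additive function F : G^n → H between abelian groups is uniquely determined by its trace: if two symmetric n-additive functions F₁, F₂ have equal traces (F₁(x,…,x) = F₂(x,…,x) for all x ∈ G, and H is uniquely divisible by n!), then F₁ = F₂. -/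
/-!
Polarization: for a symmetric multilinear `D` in `n` variables,
`∑_{T ⊆ {1,…,n}} (-1)^(n - |T|) D(∑_{i ∈ T} vᵢ, …, ∑_{i ∈ T} vᵢ) = n! • D(v₁, …, vₙ)`,
since after expanding the left side, inclusion–exclusion over `T` kills every term
`D(v_{f 1}, …, v_{f n})` with `f` not surjective. Applied to `D = F₁ - F₂`, whose trace vanishes,
this gives `n! • (F₁ - F₂) = 0`, and `n!` is injective on `H`.
-/

theorem map_update_add_of_map_update_self_add {ι : Type*} [DecidableEq ι] {G : ι → Type*}
    [∀ i, AddCommGroup (G i)] {H : Type*} [AddCommGroup H] {F : (∀ i, G i) → H}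
    (hadd : ∀ (i : ι) (v : ∀ i, G i) (y : G i),
      F (Function.update v i (v i + y)) = F v + F (Function.update v i y))
    (v : ∀ i, G i) (i : ι) (x y : G i) :
    F (Function.update v i (x + y)) = F (Function.update v i x) + F (Function.update v i y) := by
  simpa using hadd i (Function.update v i x) y

@[simps]
def MultilinearMap.ofMapUpdateAdd {ι : Type*} [dec : DecidableEq ι] {G : ι → Type*}
    [∀ i, AddCommGroup (G i)] {H : Type*} [AddCommGroup H] (F : (∀ i, G i) → H)
    (hadd : ∀ (i : ι) (v : ∀ i, G i) (y : G i),
      F (Function.update v i (v i + y)) = F v + F (Function.update v i y)) :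
    MultilinearMap ℤ G H where
  toFun := F
  map_update_add' := by
    intro inst v i x y
    rw [Subsingleton.elim inst dec]; clear inst
    exact map_update_add_of_map_update_self_add hadd v i x y
  map_update_smul' := by
    intro inst v i c x
    rw [Subsingleton.elim inst dec]; clear inst
    exact map_zsmul (AddMonoidHom.mk' (fun x => F (Function.update v i x))
      (map_update_add_of_map_update_self_add hadd v i)) c x

open Finset

theorem Finset.sum_superset_neg_one_pow_card_compl {α : Type*} [Fintype α] [DecidableEq α]
    (S : Finset α) :
    ∑ T : Finset α, (if S ⊆ T then (-1 : ℤ) ^ #Tᶜ else 0) = if S = univ then 1 else 0 := by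
  rw [Fintype.sum_bijective _ compl_bijective _ (fun U => if U ⊆ Sᶜ then (-1 : ℤ) ^ #U else 0)
    (fun T => by simp only [compl_compl, subset_compl_comm])]
  rw [← sum_filter, filter_subset_univ, sum_powerset_neg_one_pow_card]
  simp only [compl_eq_empty_iff]

theorem Fintype.sum_ite_surjective_eq_sum_perm {α M : Type*} [Fintype α] [DecidableEq α]
    [AddCommMonoid M] (g : (α → α) → M) :
    ∑ f : α → α, (if Function.Surjective f then g f else 0) = ∑ σ : Equiv.Perm α, g σ := by
  rw [← sum_filter]
  refine (sum_bij (fun (σ : Equiv.Perm α) _ => ⇑σ) (fun σ _ => by simpa using σ.surjective)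
    (fun σ _ τ _ h => Equiv.ext (congrFun h)) (fun f hf => ?_) (fun _ _ => rfl)).symm
  simp only [mem_filter, mem_univ, true_and] at hf
  exact ⟨Equiv.ofBijective f (Finite.surjective_iff_bijective.1 hf), mem_univ _, rfl⟩

namespace MultilinearMap

variable {R ι M N : Type*} [Semiring R] [AddCommMonoid M] [Module R M] [AddCommGroup N]
  [Module R N] [Fintype ι] [DecidableEq ι]

theorem sum_neg_one_pow_smul_apply_sum_eq_sum_perm (D : MultilinearMap R (fun _ : ι => M) N)
    (v : ι → M) :
    ∑ T : Finset ι, (-1 : ℤ) ^ #Tᶜ • D (fun _ => ∑ i ∈ T, v i) =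
      ∑ σ : Equiv.Perm ι, D (v ∘ σ) := by
  have expand (T : Finset ι) : (-1 : ℤ) ^ #Tᶜ • D (fun _ => ∑ i ∈ T, v i) =
      ∑ f : ι → ι, (if univ.image f ⊆ T then (-1 : ℤ) ^ #Tᶜ else 0) • D (v ∘ f) := by
    simp_rw [ite_smul, zero_smul]
    rw [D.map_sum_finset (fun _ i => v i) (fun _ => T), smul_sum, ← sum_filter]
    congr 1
    ext f
    simp [image_subset_iff]
  simp_rw [expand]
  rw [sum_comm]
  simp_rw [← sum_smul, sum_superset_neg_one_pow_card_compl, ite_smul, one_smul, zero_smul]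
  rw [← Fintype.sum_ite_surjective_eq_sum_perm (fun f => D (v ∘ f))]
  simp only [eq_univ_iff_forall, mem_image, mem_univ, true_and, Function.Surjective]
  -- the two `if`s now differ only in their `Decidable` instances
  congr!

theorem eq_zero_of_symmetric_of_apply_const_eq_zero (D : MultilinearMap R (fun _ : ι => M) N)
    (hinj : Function.Injective fun y : N => (Fintype.card ι).factorial • y)
    (hsym : ∀ (σ : Equiv.Perm ι) (v : ι → M), D (v ∘ σ) = D v)
    (hconst : ∀ x : M, D (fun _ => x) = 0) : D = 0 := by
  ext v
  apply hinj
  calc (Fintype.card ι).factorial • D v = ∑ σ : Equiv.Perm ι, D (v ∘ σ) := by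
        simp [hsym, Fintype.card_perm]
    _ = ∑ T : Finset ι, (-1 : ℤ) ^ #Tᶜ • D (fun _ => ∑ i ∈ T, v i) :=
        (D.sum_neg_one_pow_smul_apply_sum_eq_sum_perm v).symm
    _ = (Fintype.card ι).factorial • 0 := by simp [hconst]

end MultilinearMap

theorem stmt_7 {G H : Type*} [AddCommGroup G] [AddCommGroup H] (n : ℕ)
    (hdiv : Function.Bijective (fun h : H => n.factorial • h))
    (F₁ F₂ : (Fin n → G) → H)
    (haddF₁ : ∀ (i : Fin n) (v : Fin n → G) (y : G),
      F₁ (Function.update v i (v i + y)) = F₁ v + F₁ (Function.update v i y))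
    (hsym₁ : ∀ (σ : Equiv.Perm (Fin n)) (v : Fin n → G), F₁ (v ∘ σ) = F₁ v)
    (haddF₂ : ∀ (i : Fin n) (v : Fin n → G) (y : G),
      F₂ (Function.update v i (v i + y)) = F₂ v + F₂ (Function.update v i y))
    (hsym₂ : ∀ (σ : Equiv.Perm (Fin n)) (v : Fin n → G), F₂ (v ∘ σ) = F₂ v)
    (htr : ∀ x : G, F₁ (fun _ => x) = F₂ (fun _ => x)) :
    F₁ = F₂ := by
  have hD := (MultilinearMap.ofMapUpdateAdd F₁ haddF₁ - MultilinearMap.ofMapUpdateAdd F₂ haddF₂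
    ).eq_zero_of_symmetric_of_apply_const_eq_zero (by simpa using hdiv.injective)
    (by simp [hsym₁, hsym₂]) (by simp [htr])
  funext v
  exact sub_eq_zero.1 (DFunLike.congr_fun hD v)
end

section
/- Let n ∈ ℕ and f : ℝ → ℝ be additive. If the map α ↦ δ_α^{n+1} f(1) is continuous at some point (or bounded on a set of positive measure), then there exists an n-th order derivation d : ℝ → ℝ such that f(x) = d(x) + f(1)·x for all x ∈ ℝ; and conversely. -/
/-!
For additive `f`, the numbers `(δ_{α₁} ∘ ⋯ ∘ δ_{αₖ} f)(1)` form a symmetric form in the `αᵢ`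
which is additive in each entry and vanishes as soon as one entry is rational. Hence its
diagonal `g(α) = (δ_α^{n+1} f)(1)` is `ℚ`-periodic, so if `g` is bounded on a set `A` of positive
measure it is bounded on `A + ℚ`, which is conull by ergodicity of rational rotations of the
circle. For almost every `x`, all the points `x + qα` (`q ∈ ℕ`) lie in `A + ℚ`, and `g(x + qα)` is a
polynomial in `q` with leading coefficient `g(α)`; being bounded, it is constant, so `g = 0`.
Expanding `g` along lines once more shows that the whole form vanishes on `n + 1` entries, which
says exactly that `x ↦ f x - f 1 * x` is a derivation of order `n`.
-/

open MeasureTheory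

def IsDerivOfOrder (n : ℕ) (d : ℝ → ℝ) : Prop :=
  (∀ x y : ℝ, d (x + y) = d x + d y) ∧ d 1 = 0 ∧
    ∀ l : List ℝ, l.length = n + 1 → ∀ x : ℝ, (l.foldr δ d) x = 0

open Polynomial Finset
open scoped Pointwise

theorem Polynomial.coeff_sum_antidiagonal_monomial {R : Type*} [Semiring R] (c : ℕ × ℕ → R)
    {i k j : ℕ} (hik : i + k = j) :
    (∑ ik ∈ antidiagonal j, monomial ik.1 (c ik)).coeff i = c (i, k) := by
  rw [finsetSum_coeff, Finset.sum_eq_single (i, k)]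
  · simp
  · rintro ⟨i', k'⟩ h hne
    rw [coeff_monomial, if_neg]
    rintro rfl
    rw [HasAntidiagonal.mem_antidiagonal] at h
    exact hne (by simp only [Prod.mk.injEq, true_and]; omega)
  · simp [hik]

theorem Polynomial.coeff_eq_zero_of_forall_abs_eval_natCast_le (p : ℝ[X]) {C : ℝ}
    (hC : ∀ q : ℕ, |p.eval (q : ℝ)| ≤ C) {i : ℕ} (hi : i ≠ 0) : p.coeff i = 0 := by
  by_contra hpi
  have hdeg : 0 < p.degree :=
    natDegree_pos_iff_degree_pos.1 (hi.bot_lt.trans_le (le_natDegree_of_ne_zero hpi))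
  obtain ⟨q, hq⟩ := ((p.abs_tendsto_atTop hdeg).comp tendsto_natCast_atTop_atTop
    |>.eventually_gt_atTop C).exists
  exact (hC q).not_gt hq

theorem AddCircle.volume_preimage_coe_eq_zero {T : ℝ} [Fact (0 < T)] {U : Set (AddCircle T)}
    (hU : MeasurableSet U) (h : volume U = 0) : volume (((↑) : ℝ → AddCircle T) ⁻¹' U) = 0 := by
  refine (isAddFundamentalDomain_Ioc' (Fact.out : 0 < T) 0).measure_zero_of_invariant _
    (fun g => ?_) ?_
  · ext x
    obtain ⟨k, hk⟩ := AddSubgroup.mem_zmultiples_iff.1 (AddSubgroup.mem_op.1 g.2)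
    have : ((-g +ᵥ x : ℝ) : AddCircle T) = x := by
      rw [QuotientAddGroup.eq]
      simp [AddSubgroup.vadd_def, ← hk]
    simp [Set.mem_vadd_set_iff_neg_vadd_mem, this]
  · rwa [← AddCircle.add_projection_respects_measure T 0 hU]

theorem ae_mem_of_forall_add_ratCast_mem {B : Set ℝ} (hB : MeasurableSet B) (hB₀ : volume B ≠ 0)
    (hinv : ∀ (q : ℚ) (x : ℝ), x ∈ B → x + q ∈ B) : ∀ᵐ x, x ∈ B := by
  set π : ℝ → AddCircle (1 : ℝ) := (↑)
  have hpre : π ⁻¹' (π '' B) = B := by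
    refine Set.Subset.antisymm (fun x ⟨b, hb, hbx⟩ => ?_) (Set.subset_preimage_image π B)
    obtain ⟨k, hk⟩ := AddSubgroup.mem_zmultiples_iff.1 (QuotientAddGroup.eq.1 hbx)
    rw [show x = b + (k : ℚ) by rw [zsmul_one] at hk; push_cast; linarith]
    exact hinv k b hb
  have hS : MeasurableSet (π '' B) := measurableSet_quotient.2 (by rwa [← hpre] at hB)
  have hrot (n : ℕ) :
      (((1 / (n + 1 : ℕ) : ℝ) : AddCircle (1 : ℝ)) +ᵥ π '' B : Set _) =ᵐ[volume] π '' B := by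
    refine .of_eq (Set.Subset.antisymm ?_ ?_)
    · rintro _ ⟨_, ⟨b, hb, rfl⟩, rfl⟩
      refine ⟨b + ((1 / (n + 1 : ℕ) : ℚ) : ℝ), hinv _ b hb, ?_⟩
      simp [π, add_comm]
    · rintro _ ⟨b, hb, rfl⟩
      refine ⟨π (b + ((-1 / (n + 1 : ℕ) : ℚ) : ℝ)), ⟨_, hinv _ b hb, rfl⟩, ?_⟩
      dsimp only
      rw [vadd_eq_add, ← QuotientAddGroup.mk_add]
      congr 1
      push_cast
      ring
  rcases AddCircle.ae_empty_or_univ_of_forall_vadd_ae_eq_self hS.nullMeasurableSet hrot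
    ((Filter.tendsto_add_atTop_nat 1).congr fun n =>
      (AddCircle.addOrderOf_period_div n.succ_pos).symm) with h | h
  · rw [ae_eq_empty] at h
    exact absurd (hpre ▸ AddCircle.volume_preimage_coe_eq_zero hS h) hB₀
  · rw [ae_eq_univ] at h
    rw [ae_iff, ← hpre]
    exact AddCircle.volume_preimage_coe_eq_zero hS.compl h

theorem ContinuousAt.exists_bound_on_measure_pos {X : Type*} [PseudoMetricSpace X]
    [MeasurableSpace X] [OpensMeasurableSpace X] (μ : Measure X) [μ.IsOpenPosMeasure]
    {g : X → ℝ} {x₀ : X} (h : ContinuousAt g x₀) :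
    ∃ s : Set X, MeasurableSet s ∧ 0 < μ s ∧ ∃ C : ℝ, ∀ x ∈ s, |g x| ≤ C := by
  obtain ⟨ε, hε, hball⟩ := Metric.continuousAt_iff.1 h 1 one_pos
  refine ⟨Metric.ball x₀ ε, measurableSet_ball, Metric.measure_ball_pos μ x₀ hε, |g x₀| + 1,
    fun x hx => ?_⟩
  have := hball hx
  rw [Real.dist_eq] at this
  linarith [abs_sub_abs_le_abs_sub (g x) (g x₀)]

instance : LeftCommutative δ :=
  ⟨fun a b h => funext fun x => by simp only [δ, mul_left_comm a b]; ring⟩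

theorem iterate_δ_eq_foldr_replicate (α : ℝ) (f : ℝ → ℝ) (m : ℕ) :
    (δ α)^[m] f = (List.replicate m α).foldr δ f := by
  induction m with
  | zero => rfl
  | succ m ih => rw [Function.iterate_succ_apply', ih, List.replicate_succ, List.foldr_cons]

theorem foldr_δ_cons_add_const_mul (g : ℝ → ℝ) (c a : ℝ) (s : Multiset ℝ) :
    (a ::ₘ s).foldr δ (fun x => g x + c * x) = (a ::ₘ s).foldr δ g := by
  induction s using Multiset.induction_on generalizing a with
  | empty => funext x; simp only [Multiset.foldr_cons, Multiset.foldr_zero, δ]; ring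
  | cons b s ih => simp only [Multiset.foldr_cons] at ih ⊢; rw [ih]

noncomputable def deltaForm (f : ℝ → ℝ) (s : Multiset ℝ) : ℝ := s.foldr δ f 1

section DeltaForm

variable {f : ℝ → ℝ}

theorem foldr_δ_apply_add (hf : ∀ x y, f (x + y) = f x + f y) (s : Multiset ℝ) (x y : ℝ) :
    s.foldr δ f (x + y) = s.foldr δ f x + s.foldr δ f y := by
  induction s using Multiset.induction_on generalizing x y with
  | empty => exact hf x y
  | cons a s ih => simp only [Multiset.foldr_cons, δ, mul_add, ih]; ring

theorem deltaForm_cons (a : ℝ) (s : Multiset ℝ) :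
    deltaForm f (a ::ₘ s) = s.foldr δ f a - a * s.foldr δ f 1 := by
  simp [deltaForm, δ]

theorem deltaForm_cons_one (s : Multiset ℝ) : deltaForm f (1 ::ₘ s) = 0 := by
  simp [deltaForm_cons]

theorem deltaForm_cons_add (hf : ∀ x y, f (x + y) = f x + f y) (a b : ℝ) (s : Multiset ℝ) :
    deltaForm f ((a + b) ::ₘ s) = deltaForm f (a ::ₘ s) + deltaForm f (b ::ₘ s) := by
  simp only [deltaForm_cons, foldr_δ_apply_add hf]; ring

theorem deltaForm_cons_ratCast_mul (hf : ∀ x y, f (x + y) = f x + f y) (q : ℚ) (a : ℝ)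
    (s : Multiset ℝ) : deltaForm f ((q * a) ::ₘ s) = q * deltaForm f (a ::ₘ s) := by
  simpa using map_ratCast_smul (AddMonoidHom.mk' (fun b => deltaForm f (b ::ₘ s))
    (deltaForm_cons_add hf · · s)) ℝ ℝ q a

theorem deltaForm_add_replicate_add_mul (hf : ∀ x y, f (x + y) = f x + f y)
    (y a : ℝ) (q : ℚ) (j : ℕ) (s : Multiset ℝ) :
    deltaForm f (s + .replicate j (y + q * a)) =
      ∑ ik ∈ antidiagonal j, (j.choose ik.1 : ℝ) *
        ((q : ℝ) ^ ik.1 * deltaForm f (.replicate ik.1 a + s + .replicate ik.2 y)) := by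
  induction j generalizing s with
  | zero => simp
  | succ j ih =>
    rw [Multiset.replicate_succ, Multiset.add_cons, deltaForm_cons_add hf,
      deltaForm_cons_ratCast_mul hf, ← Multiset.cons_add, ← Multiset.cons_add, ih, ih,
      Finset.sum_antidiagonal_choose_succ_mul (fun i k => (q : ℝ) ^ i *
        deltaForm f (.replicate i a + s + .replicate k y)), Finset.mul_sum]
    congr 1
    · refine Finset.sum_congr rfl fun ik _ => ?_
      simp only [Multiset.replicate_succ, Multiset.add_cons, Multiset.cons_add]
    · refine Finset.sum_congr rfl fun ik hik => ?_
      rw [Nat.choose_symm_of_eq_add (mem_antidiagonal.1 hik).symm]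
      simp only [Multiset.replicate_succ, Multiset.add_cons, Multiset.cons_add, pow_succ]
      ring

theorem deltaForm_replicate_add_ratCast (hf : ∀ x y, f (x + y) = f x + f y) (m : ℕ) (y : ℝ)
    (q : ℚ) : deltaForm f (.replicate m (y + q)) = deltaForm f (.replicate m y) := by
  have h := deltaForm_add_replicate_add_mul hf y 1 q m 0
  rw [mul_one, zero_add] at h
  rw [h, Finset.sum_eq_single (0, m)]
  · simp
  · rintro ⟨_ | i, k⟩ hik hne
    · simp_all
    · rw [Multiset.replicate_succ, Multiset.cons_add, Multiset.cons_add, deltaForm_cons_one]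
      simp
  · simp

/-- The restriction of `deltaForm f` to a line is a polynomial, so it can only be bounded if all
its non-constant coefficients vanish. -/
theorem deltaForm_eq_zero_of_abs_le_on_line (hf : ∀ x y, f (x + y) = f x + f y)
    {s : Multiset ℝ} {y a C : ℝ} {j : ℕ}
    (hC : ∀ q : ℕ, |deltaForm f (s + .replicate j (y + q * a))| ≤ C)
    {i k : ℕ} (hik : i + k = j) (hi : i ≠ 0) :
    deltaForm f (.replicate i a + s + .replicate k y) = 0 := by
  set p : ℝ[X] := ∑ ik ∈ antidiagonal j,
    monomial ik.1 ((j.choose ik.1 : ℝ) * deltaForm f (.replicate ik.1 a + s + .replicate ik.2 y))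
  have heval (q : ℕ) : p.eval (q : ℝ) = deltaForm f (s + .replicate j (y + q * a)) := by
    have h := deltaForm_add_replicate_add_mul hf y a q j s
    rw [Rat.cast_natCast] at h
    rw [h, eval_finsetSum]
    exact Finset.sum_congr rfl fun _ _ => by rw [eval_monomial]; ring
  have hcoeff := p.coeff_eq_zero_of_forall_abs_eval_natCast_le (fun q => heval q ▸ hC q) hi
  rw [coeff_sum_antidiagonal_monomial _ hik] at hcoeff
  exact (mul_eq_zero.1 hcoeff).resolve_left (Nat.cast_ne_zero.2 (Nat.choose_pos (by omega)).ne')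

theorem deltaForm_replicate_eq_zero_of_abs_le (hf : ∀ x y, f (x + y) = f x + f y) {m : ℕ}
    (hm : m ≠ 0) {A : Set ℝ} (hA : MeasurableSet A) (hA₀ : volume A ≠ 0) {C : ℝ}
    (hC : ∀ α ∈ A, |deltaForm f (.replicate m α)| ≤ C) (α : ℝ) :
    deltaForm f (.replicate m α) = 0 := by
  set B := ⋃ q : ℚ, (· + (q : ℝ)) ⁻¹' A
  have hAB : A ⊆ B := fun x hx => Set.mem_iUnion.2 ⟨0, by simpa using hx⟩
  have hBC (x : ℝ) (hx : x ∈ B) : |deltaForm f (.replicate m x)| ≤ C := by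
    obtain ⟨q, hq⟩ := Set.mem_iUnion.1 hx
    simpa [deltaForm_replicate_add_ratCast hf] using hC _ hq
  have hB : ∀ᵐ x, x ∈ B := by
    refine ae_mem_of_forall_add_ratCast_mem
      (.iUnion fun q => hA.preimage (measurable_add_const _))
      (fun h => hA₀ (measure_mono_null hAB h)) fun q x hx => ?_
    obtain ⟨q', hq'⟩ := Set.mem_iUnion.1 hx
    exact Set.mem_iUnion.2 ⟨q' - q, by simpa [add_assoc] using hq'⟩
  have hline : ∀ᵐ x, ∀ q : ℕ, x + q * α ∈ B := ae_all_iff.2 fun q =>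
    (measurePreserving_add_right volume (q * α)).quasiMeasurePreserving.ae hB
  obtain ⟨x, hx⟩ := hline.exists
  simpa using deltaForm_eq_zero_of_abs_le_on_line hf (s := 0) (fun q => hBC _ (hx q))
    (add_zero m) hm

theorem deltaForm_eq_zero_of_replicate_eq_zero (hf : ∀ x y, f (x + y) = f x + f y) {m : ℕ}
    (h : ∀ α, deltaForm f (.replicate m α) = 0) (s : Multiset ℝ) (hs : s.card = m) :
    deltaForm f s = 0 := by
  suffices ∀ s : Multiset ℝ, s.card ≤ m → ∀ y, deltaForm f (s + .replicate (m - s.card) y) = 0 by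
    simpa [hs] using this s hs.le 0
  intro s
  induction s using Multiset.induction_on with
  | empty => simpa using h
  | cons a s ih =>
    intro hs y
    rw [Multiset.card_cons] at hs ⊢
    simpa [Multiset.replicate_one, Multiset.singleton_add] using
      deltaForm_eq_zero_of_abs_le_on_line hf (C := 0) (s := s) (j := m - s.card)
        (fun q => by rw [ih (by omega)]; simp) (i := 1) (k := m - (s.card + 1)) (by omega)
        one_ne_zero

theorem isDerivOfOrder_sub_mul (hf : ∀ x y, f (x + y) = f x + f y) {n : ℕ}
    (h : ∀ s : Multiset ℝ, s.card = n + 1 → deltaForm f s = 0) :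
    IsDerivOfOrder n fun x => f x - f 1 * x := by
  refine ⟨fun x y => by simp only [hf]; ring, by ring, fun l hl x => ?_⟩
  obtain ⟨a, t, rfl⟩ := List.exists_cons_of_length_eq_add_one hl
  have hlin (b : ℝ) : Multiset.foldr δ f ↑t b = b * Multiset.foldr δ f ↑t 1 := by
    have := h (b ::ₘ t) (by simpa using hl)
    rw [deltaForm_cons] at this
    linarith
  have hshift := foldr_δ_cons_add_const_mul (fun x => f x - f 1 * x) (f 1) a t
  simp only [sub_add_cancel] at hshift
  rw [← Multiset.coe_foldr, ← Multiset.cons_coe, ← hshift, Multiset.foldr_cons, δ, hlin, hlin x]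
  ring

end DeltaForm

theorem stmt_11 (n : ℕ) (f : ℝ → ℝ)
    (hadd : ∀ x y : ℝ, f (x + y) = f x + f y) :
    ((∃ α₀ : ℝ, ContinuousAt (fun α : ℝ => ((δ α)^[n + 1] f) 1) α₀) ∨
      (∃ s : Set ℝ, MeasurableSet s ∧ 0 < volume s ∧
        ∃ C : ℝ, ∀ α ∈ s, |((δ α)^[n + 1] f) 1| ≤ C)) ↔
    ∃ d : ℝ → ℝ, IsDerivOfOrder n d ∧ ∀ x : ℝ, f x = d x + f 1 * x := by
  have hdiag (α : ℝ) : ((δ α)^[n + 1] f) 1 = deltaForm f (.replicate (n + 1) α) := by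
    rw [iterate_δ_eq_foldr_replicate]; rfl
  simp only [hdiag]
  constructor
  · intro h
    obtain ⟨A, hA, hA₀, C, hC⟩ := h.elim (fun ⟨_, hα₀⟩ => hα₀.exists_bound_on_measure_pos volume) id
    have hzero := deltaForm_replicate_eq_zero_of_abs_le hadd n.succ_ne_zero hA hA₀.ne' hC
    exact ⟨_, isDerivOfOrder_sub_mul hadd (deltaForm_eq_zero_of_replicate_eq_zero hadd hzero),
      fun x => by ring⟩
  · rintro ⟨d, ⟨-, -, hd⟩, hfd⟩
    have hzero (α : ℝ) : deltaForm f (.replicate (n + 1) α) = 0 := by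
      rw [show f = fun x => d x + f 1 * x from funext hfd, deltaForm, Multiset.replicate_succ,
        foldr_δ_cons_add_const_mul, ← Multiset.replicate_succ, ← Multiset.coe_replicate,
        Multiset.coe_foldr]
      exact hd _ List.length_replicate 1
    exact Or.inl ⟨0, by simp only [hzero]; exact continuousAt_const⟩
end

section
/- If f : ℝ → ℝ is additive, then for each fixed x the map (α₁,…,α_{n+1}) ↦ δ_{α₁}∘⋯∘δ_{α_{n+1}} f(x) is a symmetric (n+1)-additive function of (α₁,…,α_{n+1}). -/
lemma delta_comm (a b : ℝ) (g : ℝ → ℝ) : δ a (δ b g) = δ b (δ a g) := by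
  funext x
  simp only [δ, mul_left_comm]
  ring

instance : LeftCommutative (δ) := ⟨fun a b g => delta_comm a b g⟩

lemma delta_additive (a : ℝ) (g : ℝ → ℝ) (hg : ∀ x y, g (x + y) = g x + g y) :
    ∀ x y, δ a g (x + y) = δ a g x + δ a g y := by
  intro x y; simp only [δ, mul_add, hg]; ring

lemma foldr_additive (f : ℝ → ℝ) (hadd : ∀ x y, f (x + y) = f x + f y) (l : List ℝ) :
    ∀ x y, (l.foldr δ f) (x + y) = (l.foldr δ f) x + (l.foldr δ f) y := by
  induction l with
  | nil => exact hadd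
  | cons a t ih => exact delta_additive a _ ih

lemma delta_lin (a : ℝ) (g h : ℝ → ℝ) (x : ℝ) :
    δ a (fun z => g z + h z) x = δ a g x + δ a h x := by
  simp only [δ]; ring

lemma key (f : ℝ → ℝ) (hadd : ∀ x y, f (x + y) = f x + f y) :
    ∀ (l : List ℝ) (i : ℕ) (h : i < l.length) (y x : ℝ),
      ((l.set i (l.get ⟨i, h⟩ + y)).foldr δ f) x =
        (l.foldr δ f) x + ((l.set i y).foldr δ f) x := by
  intro l
  induction l with
  | nil => intro i h; simp at h
  | cons a t ih =>
    intro i h y x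
    cases i with
    | zero =>
      simp only [List.set, List.foldr_cons]
      have hg := foldr_additive f hadd t
      show δ (a + y) (t.foldr δ f) x = _
      simp only [δ, add_mul, hg]
      ring
    | succ i =>
      simp only [List.set, List.foldr_cons, List.get]
      have h' : i < t.length := Nat.lt_of_succ_lt_succ h
      have : t.foldr δ f = fun z => (t.foldr δ f) z := rfl
      have heq : (t.set i (t.get ⟨i, h'⟩ + y)).foldr δ f =
          fun z => (t.foldr δ f) z + ((t.set i y).foldr δ f) z := by
        funext z; exact ih i h' y z
      rw [heq, delta_lin]

lemma ofFn_update {n : ℕ} (v : Fin n → ℝ) (i : Fin n) (w : ℝ) :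
    List.ofFn (Function.update v i w) = (List.ofFn v).set i w := by
  apply List.ext_get
  · simp
  · intro k h1 h2
    simp only [List.get_eq_getElem, List.getElem_ofFn, List.getElem_set]
    rcases eq_or_ne k i.val with hk | hk
    · simp [hk, Function.update]
    · rw [if_neg (Ne.symm hk)]
      rw [Function.update_of_ne (fun hc => hk (by simpa using congrArg Fin.val hc))]

theorem stmt_12 (n : ℕ) (f : ℝ → ℝ)
    (hadd : ∀ x y : ℝ, f (x + y) = f x + f y) (x : ℝ) :
    (∀ (i : Fin (n + 1)) (v : Fin (n + 1) → ℝ) (y : ℝ),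
      ((List.ofFn (Function.update v i (v i + y))).foldr δ f) x =
        ((List.ofFn v).foldr δ f) x + ((List.ofFn (Function.update v i y)).foldr δ f) x) ∧
    (∀ (σ : Equiv.Perm (Fin (n + 1))) (v : Fin (n + 1) → ℝ),
      ((List.ofFn (v ∘ σ)).foldr δ f) x = ((List.ofFn v).foldr δ f) x) := by
  constructor
  · intro i v y
    rw [ofFn_update, ofFn_update]
    have h : (i : ℕ) < (List.ofFn v).length := by simp [i.isLt]
    have hget : (List.ofFn v).get ⟨i, h⟩ = v i := by rw [List.get_eq_getElem, List.getElem_ofFn]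
    rw [← hget]
    exact key f hadd (List.ofFn v) i h y x
  · intro σ v
    rw [(Equiv.Perm.ofFn_comp_perm σ v).foldr_eq]
end

section
/- Let n ∈ ℕ and f : ℝ → ℝ be additive. If the map (α₁,…,α_{n+1}) ↦ δ_{α₁}∘⋯∘δ_{α_{n+1}} f(1) vanishes identically, then f - f(1)·id is an n-th order derivation, i.e., f(x) = d(x) + f(1)·x with d of order n. -/
/-!
The operators `δ_α` kill every linear map `x ↦ c x`, and they satisfy the Leibniz-type identity
`δ_α δ_β = δ_{αβ} - β δ_α - α δ_β`. By the identity, vanishing of all `(n+1)`-fold iterates at `1`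
propagates to all longer iterates, and then `g x = δ_x g 1 + x g 1` applied to an `(n+1)`-fold
iterate `g` shows that it vanishes everywhere.
-/

lemma δ_δ_apply (α β : ℝ) (g : ℝ → ℝ) (x : ℝ) :
    δ α (δ β g) x = δ (α * β) g x - β * δ α g x - α * δ β g x := by
  simp only [δ]
  ring_nf

lemma apply_eq_δ_apply_one_add (g : ℝ → ℝ) (x : ℝ) : g x = δ x g 1 + x * g 1 := by
  simp only [δ]
  ring_nf

lemma δ_sub_const_mul (α c : ℝ) (f : ℝ → ℝ) : δ α (fun y => f y - c * y) = δ α f := by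
  funext x
  simp only [δ]
  ring

lemma foldr_δ_sub_const_mul {l : List ℝ} (hl : l ≠ []) (c : ℝ) (f : ℝ → ℝ) :
    l.foldr δ (fun y => f y - c * y) = l.foldr δ f := by
  -- `foldr` applies the operator of the last entry of `l` to `f` first.
  rw [← List.dropLast_append_getLast hl, List.foldr_append, List.foldr_append]
  simp only [List.foldr_cons, List.foldr_nil, δ_sub_const_mul]

lemma foldr_δ_apply_eq_zero_of_length_le {n : ℕ} {f : ℝ → ℝ} {x : ℝ}
    (h : ∀ l : List ℝ, l.length = n + 1 → (l.foldr δ f) x = 0)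
    {l : List ℝ} (hl : n + 1 ≤ l.length) : (l.foldr δ f) x = 0 := by
  obtain ⟨k, hk⟩ := Nat.exists_eq_add_of_le hl
  clear hl
  induction k generalizing l with
  | zero => exact h l hk
  | succ k ih =>
    rcases l with _ | ⟨a, _ | ⟨b, l⟩⟩
    · simp at hk
    · simp at hk; omega
    · have hlen : ∀ c : ℝ, (c :: l).length = n + 1 + k := by simp at hk ⊢; omega
      have hab := ih (hlen (a * b))
      have ha := ih (hlen a)
      have hb := ih (hlen b)
      simp only [List.foldr_cons] at hab ha hb ⊢
      rw [δ_δ_apply, hab, ha, hb]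
      ring

lemma foldr_δ_eq_zero_of_apply_one {n : ℕ} {f : ℝ → ℝ}
    (h : ∀ l : List ℝ, l.length = n + 1 → (l.foldr δ f) 1 = 0)
    {l : List ℝ} (hl : l.length = n + 1) : l.foldr δ f = 0 := by
  funext x
  have hx : δ x (l.foldr δ f) 1 = 0 :=
    foldr_δ_apply_eq_zero_of_length_le (l := x :: l) h (by simp [hl])
  rw [apply_eq_δ_apply_one_add (l.foldr δ f) x, hx, h l hl]
  simp

theorem stmt_13 (n : ℕ) (f : ℝ → ℝ)
    (hadd : ∀ x y : ℝ, f (x + y) = f x + f y)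
    (h : ∀ l : List ℝ, l.length = n + 1 → (l.foldr δ f) 1 = 0) :
    IsDerivOfOrder n (fun x => f x - f 1 * x) ∧
      ∀ x : ℝ, f x = (f x - f 1 * x) + f 1 * x := by
  refine ⟨⟨fun x y => by simp only [hadd]; ring, by ring, fun l hl x => ?_⟩, fun x => by ring⟩
  have hne : l ≠ [] := List.ne_nil_of_length_pos (by omega)
  rw [foldr_δ_sub_const_mul hne, foldr_δ_eq_zero_of_apply_one h hl, Pi.zero_apply]
end

section
/- (Hyers stability theorem) Let X, Y be Banach spaces, ε ≥ 0, and f : X → Y satisfy ‖f(x+y) - f(x) - f(y)‖ ≤ ε for all x, y ∈ X. Then for each x the limit a(x) = lim_{n→∞} f(2^n x)/2^n exists, a is additive, ‖f(x) - a(x)‖ ≤ ε for all x, and a is the unique additive function with this property. -/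
open Filter Topology

theorem stmt_14 {X Y : Type*}
    [NormedAddCommGroup X] [NormedSpace ℝ X] [CompleteSpace X]
    [NormedAddCommGroup Y] [NormedSpace ℝ Y] [CompleteSpace Y]
    (ε : ℝ) (hε : 0 ≤ ε) (f : X → Y)
    (h : ∀ x y : X, ‖f (x + y) - f x - f y‖ ≤ ε) :
    ∃ a : X → Y,
      (∀ x : X, Tendsto (fun n : ℕ => ((2 : ℝ) ^ n)⁻¹ • f (((2 : ℝ) ^ n) • x))
        atTop (𝓝 (a x))) ∧
      (∀ x y : X, a (x + y) = a x + a y) ∧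
      (∀ x : X, ‖f x - a x‖ ≤ ε) ∧
      (∀ a' : X → Y, (∀ x y : X, a' (x + y) = a' x + a' y) →
        (∀ x : X, ‖f x - a' x‖ ≤ ε) → a' = a) := by
  set g : ℕ → X → Y := fun n x => ((2 : ℝ) ^ n)⁻¹ • f (((2 : ℝ) ^ n) • x) with hg
  have key : ∀ u : X, ‖f ((2 : ℝ) • u) - (2 : ℝ) • f u‖ ≤ ε := by
    intro u
    have := h u u
    rw [two_smul, two_smul]
    simpa [sub_sub] using this
  have hdist : ∀ x n, dist (g n x) (g (n + 1) x) ≤ (ε / 2) * (1 / 2) ^ n := by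
    intro x n
    have h2 : (0:ℝ) < 2 ^ (n+1) := by positivity
    have e1 : ((2:ℝ) ^ (n+1)) • x = (2:ℝ) • (((2:ℝ) ^ n) • x) := by
      rw [smul_smul]; congr 1; ring
    have e2 : g n x - g (n+1) x
        = ((2:ℝ) ^ (n+1))⁻¹ • ((2:ℝ) • f (((2:ℝ)^n) • x) - f (((2:ℝ)^(n+1)) • x)) := by
      have hsc : ((2:ℝ)^(n+1))⁻¹ * 2 = ((2:ℝ)^n)⁻¹ := by
        rw [pow_succ, mul_inv, mul_assoc, inv_mul_cancel₀ two_ne_zero, mul_one]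
      rw [smul_sub, smul_smul, hsc]
    rw [dist_eq_norm, e2, norm_smul, norm_inv, Real.norm_of_nonneg (le_of_lt h2)]
    have : ‖(2:ℝ) • f (((2:ℝ)^n) • x) - f (((2:ℝ)^(n+1)) • x)‖ ≤ ε := by
      rw [norm_sub_rev, e1]; exact key _
    calc ((2:ℝ) ^ (n+1))⁻¹ * ‖(2:ℝ) • f (((2:ℝ)^n) • x) - f (((2:ℝ)^(n+1)) • x)‖
        ≤ ((2:ℝ) ^ (n+1))⁻¹ * ε := by
          have h2' : (0:ℝ) ≤ ((2:ℝ) ^ (n+1))⁻¹ := by positivity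
          exact mul_le_mul_of_nonneg_left this h2'
      _ = (ε / 2) * (1 / 2) ^ n := by
          rw [one_div, inv_pow, pow_succ, mul_inv]; ring
  have hcau : ∀ x, CauchySeq (fun n => g n x) := fun x =>
    cauchySeq_of_le_geometric (1/2) (ε/2) (by norm_num) (hdist x)
  have hex : ∀ x, ∃ y : Y, Tendsto (fun n => g n x) atTop (𝓝 y) := fun x =>
    cauchySeq_tendsto_of_complete (hcau x)
  choose a ha using hex
  have hsmall : Tendsto (fun n : ℕ => ε * ((2:ℝ)^n)⁻¹) atTop (𝓝 0) := by
    have : Tendsto (fun n : ℕ => ((2:ℝ)^n)⁻¹) atTop (𝓝 0) := by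
      simpa using tendsto_pow_atTop_nhds_zero_of_lt_one (by norm_num : (0:ℝ) ≤ 1/2)
        (by norm_num : (1:ℝ)/2 < 1) |>.congr (fun n => by rw [one_div, inv_pow])
    simpa using this.const_mul ε
  have hadd : ∀ x y : X, a (x + y) = a x + a y := by
    intro x y
    have hd : Tendsto (fun n => g n (x + y) - (g n x + g n y)) atTop (𝓝 0) := by
      refine squeeze_zero_norm (fun n => ?_) hsmall
      have e : g n (x+y) - (g n x + g n y)
          = ((2:ℝ)^n)⁻¹ • (f (((2:ℝ)^n) • x + ((2:ℝ)^n) • y)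
              - f (((2:ℝ)^n) • x) - f (((2:ℝ)^n) • y)) := by
        simp [hg, smul_add, smul_sub, sub_sub]
      rw [e, norm_smul, norm_inv, Real.norm_of_nonneg (by positivity), mul_comm]
      exact mul_le_mul_of_nonneg_right (h _ _) (by positivity)
    have h1 : Tendsto (fun n => (g n (x+y) - (g n x + g n y)) + (g n x + g n y))
        atTop (𝓝 (0 + (a x + a y))) := hd.add ((ha x).add (ha y))
    simp only [sub_add_cancel, zero_add] at h1
    exact tendsto_nhds_unique (ha (x+y)) h1
  have hbound : ∀ x : X, ‖f x - a x‖ ≤ ε := by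
    intro x
    have := dist_le_of_le_geometric_of_tendsto₀ (1/2) (ε/2) (by norm_num)
      (hdist x) (ha x)
    have e0 : g 0 x = f x := by simp [hg]
    rw [e0, dist_eq_norm] at this
    calc ‖f x - a x‖ ≤ ε / 2 / (1 - 1/2) := this
      _ = ε := by norm_num [div_div]
  refine ⟨a, ha, hadd, hbound, ?_⟩
  intro a' hadd' hb'
  have hpow : ∀ (n : ℕ) (x : X), a' (((2:ℝ)^n) • x) = ((2:ℝ)^n) • a' x := by
    intro n
    induction n with
    | zero => intro x; simp
    | succ n ih =>
      intro x
      have e1 : ((2:ℝ) ^ (n+1)) • x = ((2:ℝ) ^ n) • x + ((2:ℝ) ^ n) • x := by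
        rw [← two_smul ℝ, smul_smul, pow_succ, mul_comm]
      rw [e1, hadd', ih, ← two_smul ℝ, smul_smul, pow_succ, mul_comm]
  funext x
  have hto : Tendsto (fun n => g n x) atTop (𝓝 (a' x)) := by
    have hd : Tendsto (fun n => g n x - a' x) atTop (𝓝 0) := by
      refine squeeze_zero_norm (fun n => ?_) hsmall
      have e : g n x - a' x = ((2:ℝ)^n)⁻¹ • (f (((2:ℝ)^n) • x) - a' (((2:ℝ)^n) • x)) := by
        rw [smul_sub, hpow, smul_smul, inv_mul_cancel₀ (by positivity), one_smul]
      rw [e, norm_smul, norm_inv, Real.norm_of_nonneg (by positivity), mul_comm]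
      exact mul_le_mul_of_nonneg_right (hb' _) (by positivity)
    have := hd.add (tendsto_const_nhds (x := a' x))
    simpa using this
  exact tendsto_nhds_unique hto (ha x)
end

section
/- Let n ∈ ℕ, ε ≥ 0, and f : ℝ → ℝ satisfy |f(x+y) - f(x) - f(y)| < ε for all x, y ∈ ℝ. Assume the map (α, x) ↦ δ_α^{n+1} f(x) is locally bounded. Then there exist an n-th order derivation d : ℝ → ℝ and λ ∈ ℝ such that |f(x) - (d(x) + λx)| ≤ ε for all x ∈ ℝ. -/
/-!
By Hyers' theorem `f` is `ε`-close to an additive `a`, and `d x := a x - a 1 * x` is additive with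
`d 1 = 0`. Since `δ β` kills linear maps and moves bounded perturbations by a bounded amount,
`(β, x) ↦ (δ β)^[n+1] d x` is locally bounded. For additive `g` the operators `δ β` commute and
`δ (β + t α) = δ β + t δ α` for `t ∈ ℕ`, so `(δ (β + t α))^[m+1] g x` is a polynomial in `t` whose
linear coefficient `(m + 1) (δ β)^[m] (δ α g) x` is a fixed combination of its values at
`t = 0, …, m + 1`: local boundedness passes from `g` at order `m + 1` to `δ α g` at order `m`.
After `n` such steps an additive `h` has `γ ↦ δ γ h 1 = h γ - γ h 1` bounded near `0`, so `h` is
linear and `δ β h = 0`.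
-/

open Filter Topology Finset Matrix

theorem exists_addMonoidHom_norm_sub_le {E F : Type*} [AddCommMonoid E] [NormedAddCommGroup F]
    [NormedSpace ℝ F] [CompleteSpace F] {f : E → F} {ε : ℝ}
    (hf : ∀ x y, ‖f (x + y) - f x - f y‖ ≤ ε) :
    ∃ a : E →+ F, ∀ x, ‖f x - a x‖ ≤ ε := by
  set s : E → ℕ → F := fun x k => ((2 : ℝ) ^ k)⁻¹ • f (2 ^ k • x)
  have hs_succ : ∀ x k, s x k - s x (k + 1) =
      ((2 : ℝ) ^ (k + 1))⁻¹ • -(f (2 ^ k • x + 2 ^ k • x) - f (2 ^ k • x) - f (2 ^ k • x)) := by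
    intro x k
    have h2 : 2 ^ (k + 1) • x = 2 ^ k • x + 2 ^ k • x := by rw [pow_succ, mul_two, add_nsmul]
    simp only [s, h2]
    module
  have hs_dist : ∀ x k, dist (s x k) (s x (k + 1)) ≤ ε / 2 * (1 / 2) ^ k := by
    intro x k
    rw [dist_eq_norm, hs_succ, norm_smul, norm_neg, norm_inv, norm_pow, Real.norm_two]
    calc ((2 : ℝ) ^ (k + 1))⁻¹ * _ ≤ ((2 : ℝ) ^ (k + 1))⁻¹ * ε := by gcongr; exact hf _ _
      _ = ε / 2 * (1 / 2) ^ k := by rw [one_div, inv_pow, pow_succ, mul_inv]; ring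
  choose a ha using fun x =>
    cauchySeq_tendsto_of_complete (cauchySeq_of_le_geometric _ _ (by norm_num) (hs_dist x))
  have hadd_err : ∀ x y k, s (x + y) k - s x k - s y k =
      ((2 : ℝ) ^ k)⁻¹ • (f (2 ^ k • x + 2 ^ k • y) - f (2 ^ k • x) - f (2 ^ k • y)) := by
    intro x y k
    simp only [s, nsmul_add]
    module
  have hadd : ∀ x y, a (x + y) = a x + a y := by
    intro x y
    have hlim := ((ha (x + y)).sub (ha x)).sub (ha y)
    have hzero : Tendsto (fun k => s (x + y) k - s x k - s y k) atTop (𝓝 0) := by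
      have hgeom := (tendsto_inv_atTop_zero.comp
        (tendsto_pow_atTop_atTop_of_one_lt one_lt_two)).mul_const ε
      rw [zero_mul] at hgeom
      refine squeeze_zero_norm (fun k => ?_) hgeom
      rw [hadd_err, norm_smul, norm_inv, norm_pow, Real.norm_two]
      exact mul_le_mul_of_nonneg_left (hf _ _) (by positivity)
    rw [← sub_eq_zero, ← sub_sub]
    exact tendsto_nhds_unique hlim hzero
  refine ⟨AddMonoidHom.mk' a hadd, fun x => ?_⟩
  have := dist_le_of_le_geometric_of_tendsto₀ _ _ (by norm_num) (hs_dist x) (ha x)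
  simpa [s, dist_eq_norm] using this.trans_eq (by ring)

theorem exists_weights_eq_sum_mul_sum_pow_mul {K : Type*} [Field K] {N : ℕ} {x : Fin N → K}
    (hx : Function.Injective x) (k : Fin N) :
    ∃ w : Fin N → K, ∀ v : Fin N → K, v k = ∑ t, w t * ∑ j : Fin N, x t ^ (j : ℕ) * v j := by
  set V := vandermonde x
  have hV : IsUnit V.det := (det_vandermonde_ne_zero_iff.mpr hx).isUnit
  refine ⟨V⁻¹ k, fun v => ?_⟩
  calc v k = (V⁻¹ *ᵥ (V *ᵥ v)) k := by rw [mulVec_mulVec, nonsing_inv_mul V hV, one_mulVec]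
    _ = _ := by simp [V, mulVec, dotProduct]

theorem delta_comm_s15 (α β : ℝ) (f : ℝ → ℝ) : δ α (δ β f) = δ β (δ α f) := by
  funext x
  simp only [δ, mul_left_comm α β]
  ring

theorem iterate_delta_sub (β : ℝ) (u v : ℝ → ℝ) (k : ℕ) :
    (δ β)^[k] (u - v) = (δ β)^[k] u - (δ β)^[k] v := by
  induction k with
  | zero => rfl
  | succ k ih =>
    simp only [Function.iterate_succ_apply', ih]
    funext x
    simp only [δ, Pi.sub_apply]
    ring

theorem abs_iterate_delta_le {w : ℝ → ℝ} {c : ℝ} (hw : ∀ y, |w y| ≤ c) (β : ℝ) (k : ℕ) (x : ℝ) :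
    |(δ β)^[k] w x| ≤ (1 + |β|) ^ k * c := by
  induction k generalizing x with
  | zero => simpa using hw x
  | succ k ih =>
    rw [Function.iterate_succ_apply']
    calc |(δ β)^[k] w (β * x) - β * (δ β)^[k] w x|
        ≤ |(δ β)^[k] w (β * x)| + |β| * |(δ β)^[k] w x| := by
          rw [← abs_mul]; exact abs_sub _ _
      _ ≤ (1 + |β|) ^ k * c + |β| * ((1 + |β|) ^ k * c) := by gcongr <;> apply ih
      _ = (1 + |β|) ^ (k + 1) * c := by ring

theorem delta_sub_const_mul (β c : ℝ) (f : ℝ → ℝ) : δ β (fun x => f x - c * x) = δ β f := by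
  funext x
  simp only [δ]
  ring

noncomputable def deltaEnd (β : ℝ) : Module.End ℝ (ℝ →+ ℝ) where
  toFun g := AddMonoidHom.mk' (δ β g) fun x y => by simp only [δ, mul_add, map_add]; ring
  map_add' g h := by ext x; simp only [δ, AddMonoidHom.mk'_apply, AddMonoidHom.add_apply]; ring
  map_smul' c g := by
    ext x
    simp only [δ, AddMonoidHom.mk'_apply, AddMonoidHom.smul_apply, smul_eq_mul, RingHom.id_apply]
    ring

theorem coe_deltaEnd_apply (β : ℝ) (g : ℝ →+ ℝ) : ⇑(deltaEnd β g) = δ β g := rfl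

theorem coe_deltaEnd_pow_apply (β : ℝ) (k : ℕ) (g : ℝ →+ ℝ) :
    ⇑((deltaEnd β ^ k) g) = (δ β)^[k] g := by
  induction k with
  | zero => rfl
  | succ k ih => rw [pow_succ', Module.End.mul_apply, coe_deltaEnd_apply, ih,
      Function.iterate_succ_apply']

theorem deltaEnd_commute (α β : ℝ) : Commute (deltaEnd α) (deltaEnd β) :=
  LinearMap.ext fun g => AddMonoidHom.ext fun x => congrFun (delta_comm_s15 α β g) x

theorem deltaEnd_add_nat_mul (α β : ℝ) (t : ℕ) :
    deltaEnd (β + t * α) = deltaEnd β + (t : ℝ) • deltaEnd α := by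
  ext g x
  have hg : g (t * (α * x)) = t * g (α * x) := by rw [← nsmul_eq_mul, map_nsmul, nsmul_eq_mul]
  simp only [coe_deltaEnd_apply, LinearMap.add_apply, LinearMap.smul_apply, δ, add_mul, map_add,
    mul_assoc, hg, AddMonoidHom.add_apply, AddMonoidHom.smul_apply, smul_eq_mul]
  ring

theorem iterate_delta_add_nat_mul (g : ℝ →+ ℝ) (α β : ℝ) (t m : ℕ) (x : ℝ) :
    (δ (β + t * α))^[m] g x =
      ∑ j : Fin (m + 1), (t : ℝ) ^ (j : ℕ) * (m.choose j * (δ α)^[j] ((δ β)^[m - j] g) x) := by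
  rw [← coe_deltaEnd_pow_apply, deltaEnd_add_nat_mul, add_comm,
    (((deltaEnd_commute α β).smul_left (t : ℝ))).add_pow, ← Fin.sum_univ_eq_sum_range]
  simp [LinearMap.sum_apply, Module.End.mul_apply, smul_pow, ← coe_deltaEnd_pow_apply]

def LocallyBoundedIterateDelta (m : ℕ) (f : ℝ → ℝ) : Prop :=
  ∀ r : ℝ, 0 < r → ∃ C : ℝ, ∀ β x : ℝ, |β| ≤ r → |x| ≤ r → |(δ β)^[m] f x| ≤ C

namespace LocallyBoundedIterateDelta

variable {m : ℕ}

theorem of_abs_sub_le {u v : ℝ → ℝ} {ε : ℝ} (hu : LocallyBoundedIterateDelta m u)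
    (huv : ∀ x, |u x - v x| ≤ ε) : LocallyBoundedIterateDelta m v := by
  intro r hr
  obtain ⟨C, hC⟩ := hu r hr
  have hε : 0 ≤ ε := (abs_nonneg _).trans (huv 0)
  refine ⟨C + (1 + r) ^ m * ε, fun β x hβ hx => ?_⟩
  have hdiff := abs_iterate_delta_le (w := u - v) huv β m x
  rw [iterate_delta_sub, Pi.sub_apply] at hdiff
  calc |(δ β)^[m] v x| ≤ |(δ β)^[m] u x| + |(δ β)^[m] u x - (δ β)^[m] v x| := by
        simpa using abs_sub ((δ β)^[m] u x) ((δ β)^[m] u x - (δ β)^[m] v x)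
    _ ≤ C + (1 + r) ^ m * ε := by gcongr; exacts [hC β x hβ hx, hdiff.trans (by gcongr)]

theorem sub_const_mul {f : ℝ → ℝ} (hf : LocallyBoundedIterateDelta (m + 1) f) (c : ℝ) :
    LocallyBoundedIterateDelta (m + 1) fun x => f x - c * x := by
  simpa only [LocallyBoundedIterateDelta, Function.iterate_succ_apply, delta_sub_const_mul] using hf

theorem deltaEnd {g : ℝ →+ ℝ} (hg : LocallyBoundedIterateDelta (m + 1) g) (α : ℝ) :
    LocallyBoundedIterateDelta m (_root_.deltaEnd α g) := by
  obtain ⟨w, hw⟩ := exists_weights_eq_sum_mul_sum_pow_mul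
    (x := fun t : Fin (m + 2) => ((t : ℕ) : ℝ)) (Nat.cast_injective.comp Fin.val_injective) 1
  intro r hr
  obtain ⟨C, hC⟩ := hg (r + (m + 1) * |α|) (by positivity)
  refine ⟨∑ t, |w t| * C, fun β x hβ hx => ?_⟩
  set v : Fin (m + 2) → ℝ := fun j => (m + 1).choose j * (δ α)^[j] ((δ β)^[m + 1 - j] g) x
  have hv : ∀ t : Fin (m + 2), |∑ j : Fin (m + 2), ((t : ℕ) : ℝ) ^ (j : ℕ) * v j| ≤ C := by
    intro t
    rw [← iterate_delta_add_nat_mul]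
    have ht : ((t : ℕ) : ℝ) ≤ m + 1 := by exact_mod_cast Nat.lt_succ_iff.mp t.isLt
    refine hC _ _ ?_ (by nlinarith [abs_nonneg α])
    calc |β + (t : ℕ) * α| ≤ |β| + (t : ℕ) * |α| := by
          simpa [abs_mul] using abs_add_le β ((t : ℕ) * α)
      _ ≤ r + (m + 1) * |α| := by gcongr
  have hv1 : v 1 = (m + 1) * (δ β)^[m] (δ α g) x := by
    have hcomm : δ α ((δ β)^[m] g) = (δ β)^[m] (δ α g) :=
      Function.Commute.iterate_right (delta_comm_s15 α β) m g
    simp [v, hcomm]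
  calc |(δ β)^[m] (_root_.deltaEnd α g) x| ≤ |v 1| := by
        rw [hv1, abs_mul, coe_deltaEnd_apply]
        exact le_mul_of_one_le_left (abs_nonneg _) (by rw [abs_of_pos (by positivity)]; linarith)
    _ = |∑ t, w t * ∑ j : Fin (m + 2), ((t : ℕ) : ℝ) ^ (j : ℕ) * v j| := by rw [← hw v]
    _ ≤ ∑ t, |w t| * C := by
        refine (abs_sum_le_sum_abs _ _).trans (sum_le_sum fun t _ => ?_)
        rw [abs_mul]
        exact mul_le_mul_of_nonneg_left (hv t) (abs_nonneg _)

theorem foldr_deltaEnd {g : ℝ →+ ℝ} (hg : LocallyBoundedIterateDelta m g) :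
    ∀ l : List ℝ, l.length ≤ m →
      LocallyBoundedIterateDelta (m - l.length)
        ⇑(l.foldr (fun β (h : ℝ →+ ℝ) => _root_.deltaEnd β h) g)
  | [], _ => hg
  | β :: l, hl => by
    have hl' : l.length < m := by simpa using hl
    have ih := foldr_deltaEnd hg l hl'.le
    rw [show m - l.length = m - (β :: l).length + 1 by simp; omega] at ih
    exact ih.deltaEnd β

end LocallyBoundedIterateDelta

theorem coe_foldr_deltaEnd (g : ℝ →+ ℝ) :
    ∀ l : List ℝ, ⇑(l.foldr (fun β (h : ℝ →+ ℝ) => deltaEnd β h) g) = l.foldr δ g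
  | [] => rfl
  | β :: l => by rw [List.foldr_cons, List.foldr_cons, coe_deltaEnd_apply, coe_foldr_deltaEnd g l]

theorem AddMonoidHom.apply_eq_mul_map_one_of_abs_le (g : ℝ →+ ℝ) {C : ℝ}
    (hC : ∀ x, |x| ≤ 1 → |g x| ≤ C) (x : ℝ) : g x = x * g 1 := by
  have hbdd : Bornology.IsBounded (g '' Metric.closedBall 0 1) := by
    refine isBounded_iff_forall_norm_le.mpr ⟨C, ?_⟩
    rintro _ ⟨y, hy, rfl⟩
    exact hC y (by simpa using hy)
  have hg := g.continuous_of_isBounded_nhds_zero (Metric.closedBall_mem_nhds 0 one_pos) hbdd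
  simpa using map_real_smul g hg x 1

theorem delta_eq_zero_of_abs_delta_le {g : ℝ →+ ℝ} {C : ℝ}
    (hC : ∀ γ, |γ| ≤ 1 → |δ γ g 1| ≤ C) (β : ℝ) : δ β g = 0 := by
  set K : ℝ →+ ℝ := g - AddMonoidHom.mulLeft (g 1)
  have hK : ∀ γ, K γ = δ γ g 1 := fun γ => by simp [K, δ, mul_comm]
  have hK_lin := K.apply_eq_mul_map_one_of_abs_le (fun γ hγ => (hK γ).symm ▸ hC γ hγ)
  have hlin : ∀ x, g x = g 1 * x := fun x => by
    have := hK_lin x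
    simp only [K, AddMonoidHom.sub_apply, AddMonoidHom.coe_mulLeft, mul_one, sub_self,
      mul_zero] at this
    linarith
  funext x
  simp only [δ, Pi.zero_apply]
  rw [hlin (β * x), hlin x]
  ring

theorem foldr_delta_eq_zero {n : ℕ} {g : ℝ →+ ℝ} (hg : LocallyBoundedIterateDelta (n + 1) g)
    (l : List ℝ) (hl : l.length = n + 1) : l.foldr δ g = 0 := by
  obtain _ | ⟨β, l⟩ := l
  · simp at hl
  have hl' : l.length = n := by simpa using hl
  have h1 := hg.foldr_deltaEnd l (by omega)
  rw [hl', Nat.add_sub_cancel_left] at h1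
  obtain ⟨C, hC⟩ := h1 1 one_pos
  rw [List.foldr_cons, ← coe_foldr_deltaEnd]
  exact delta_eq_zero_of_abs_delta_le (fun γ hγ => by simpa using hC γ 1 hγ (by simp)) β

theorem stmt_15_general (n : ℕ) (ε : ℝ) (f : ℝ → ℝ)
    (h : ∀ x y : ℝ, |f (x + y) - f x - f y| < ε)
    (hlb : ∀ r : ℝ, 0 < r → ∃ C : ℝ, ∀ α x : ℝ, |α| ≤ r → |x| ≤ r →
      |((δ α)^[n + 1] f) x| ≤ C) :
    ∃ (d : ℝ → ℝ) (lam : ℝ), IsDerivOfOrder n d ∧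
      ∀ x : ℝ, |f x - (d x + lam * x)| ≤ ε := by
  obtain ⟨a, ha⟩ := exists_addMonoidHom_norm_sub_le (f := f) (fun x y => (h x y).le)
  set d : ℝ →+ ℝ := a - AddMonoidHom.mulLeft (a 1)
  have hfd : ∀ x, |f x - (d x + a 1 * x)| ≤ ε := fun x => by simpa [d] using ha x
  have hd : LocallyBoundedIterateDelta (n + 1) d :=
    (LocallyBoundedIterateDelta.sub_const_mul hlb (a 1)).of_abs_sub_le fun x => by
      rw [show f x - a 1 * x - d x = f x - (d x + a 1 * x) by ring]; exact hfd x
  refine ⟨d, a 1, ⟨map_add d, by simp [d], fun l hl x => ?_⟩, hfd⟩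
  rw [foldr_delta_eq_zero hd l hl, Pi.zero_apply]

theorem stmt_15 (n : ℕ) (ε : ℝ) (hε : 0 ≤ ε) (f : ℝ → ℝ)
    (h : ∀ x y : ℝ, |f (x + y) - f x - f y| < ε)
    (hlb : ∀ r : ℝ, 0 < r → ∃ C : ℝ, ∀ α x : ℝ, |α| ≤ r → |x| ≤ r →
      |((δ α)^[n + 1] f) x| ≤ C) :
    ∃ (d : ℝ → ℝ) (lam : ℝ), IsDerivOfOrder n d ∧
      ∀ x : ℝ, |f x - (d x + lam * x)| ≤ ε :=
  stmt_15_general n ε f h hlb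
end
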